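/- Let M be a matroid of rank at least 2 on ground set E, let N be a cyclic reduction of M (that is, {∅, cyc_M(E)} ⊆ Z(N) ⊆ Z(M) and rank_N(Z) = rank_M(Z) for all Z ∈ Z(N)). Then for every flat F of N there exists a flat G of M with F ⊆ G and rank_N(F) = rank_M(G). In particular, rank_M(A) ≤ rank_N(A) for all A ⊆ E. -/

import Mathlib

open Matroid Set
open scoped Classical

variable {α : Type*}

/-- A circuit of a matroid: a minimal dependent set. -/
def Matroid.Circuit' (M : Matroid α) (C : Set α) : Prop :=
  M.Dep C ∧ ∀ D, D ⊂ C → M.Indep D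

/-- The cyclic part `cyc_M(F)` of a set `F`: the union of all circuits of `M` contained
in `F`. -/
def Matroid.cyc (M : Matroid α) (F : Set α) : Set α :=
  ⋃₀ {C | M.Circuit' C ∧ C ⊆ F}

/-- The (extended) rank of a set in a matroid: the supremum of the cardinalities of the
independent subsets. -/
noncomputable def Matroid.eRk' (M : Matroid α) (X : Set α) : ℕ∞ :=
  ⨆ I ∈ {I | M.Indep I ∧ I ⊆ X}, I.encard

/-- The rank of a matroid. -/
noncomputable def Matroid.rk' (M : Matroid α) : ℕ∞ := M.eRk' M.E

/-- A matroid is loopfree if every element of the ground set is independent. -/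
def Matroid.Loopless' (M : Matroid α) : Prop := ∀ e ∈ M.E, M.Indep {e}

/-- `U` is the matroid union `M ∨ N`: its independent sets are exactly the unions of an
independent set of `M` and an independent set of `N`. -/
def IsMatroidUnion (M N U : Matroid α) : Prop :=
  U.E = M.E ∧ ∀ X, U.Indep X ↔ ∃ I J, M.Indep I ∧ N.Indep J ∧ X = I ∪ J

/-- `P` is the matroid intersection `M ∧ N := (M* ∨ N*)*`. -/
def IsMatroidInter (M N P : Matroid α) : Prop :=
  ∃ U, IsMatroidUnion M✶ N✶ U ∧ P = U✶

/-- Contraction of a set in a matroid, defined by duality: `M/A = (M* \ A)*`. -/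
def Matroid.contract' (M : Matroid α) (A : Set α) : Matroid α := (M✶ ↾ (M.E \ A))✶

/-- A cyclic flat: a flat which is the union of the circuits contained in it. -/
def Matroid.CyclicFlat (M : Matroid α) (F : Set α) : Prop :=
  M.IsFlat F ∧ F = M.cyc F

/-- A nested matroid: one whose cyclic flats form a chain under inclusion. -/
def Matroid.Nested (M : Matroid α) : Prop := IsChain (· ⊆ ·) {F | M.CyclicFlat F}

/-
In any matroid the elements of `X` outside `cyc X` are coloops of `M ↾ X`, so
`r(X) = r(cyc X) + |X \ cyc X|`; moreover `cyc F` is a cyclic flat whenever `F` is a flat. For the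
`N`-closure `F` of `A ⊆ E` this gives
`r_M(A) ≤ r_M(F) ≤ r_M(cyc_N F) + |F \ cyc_N F| = r_N(cyc_N F) + |F \ cyc_N F| = r_N(A)`,
and the same computation with `cyc_M E` gives `r(N) ≤ r(M)`. So for an `N`-flat `F` we have
`r_M(F) ≤ r_N(F) ≤ r(M)`, and the `M`-closure of a set squeezed between an `M`-basis of `F`
and a base of `M` is a flat `G ⊇ F` of `M`-rank exactly `r_N(F)`.
-/

namespace Matroid

variable {M N : Matroid α} {A X Y F C I : Set α} {e : α}

lemma eRk'_eq_eRk (M : Matroid α) (X : Set α) : M.eRk' X = M.eRk X := by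
  refine le_antisymm (iSup₂_le fun _ hI => hI.1.encard_le_eRk_of_subset hI.2) ?_
  obtain ⟨I, hI⟩ := M.exists_isBasis' X
  rw [← hI.encard_eq_eRk]
  exact le_iSup₂_of_le I ⟨hI.indep, hI.subset⟩ le_rfl

lemma circuit'_iff : M.Circuit' C ↔ M.IsCircuit C :=
  isCircuit_iff_forall_ssubset.symm

lemma mem_cyc_iff : e ∈ M.cyc X ↔ ∃ C, M.IsCircuit C ∧ C ⊆ X ∧ e ∈ C := by
  simp only [cyc, mem_sUnion, mem_ofPred_eq, circuit'_iff, and_assoc]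

lemma cyc_subset (M : Matroid α) (X : Set α) : M.cyc X ⊆ X :=
  sUnion_subset fun _ hC => hC.2

lemma IsCircuit.subset_cyc (hC : M.IsCircuit C) (hCX : C ⊆ X) : C ⊆ M.cyc X :=
  fun _ he => mem_cyc_iff.2 ⟨C, hC, hCX, he⟩

lemma cyc_cyc (M : Matroid α) (X : Set α) : M.cyc (M.cyc X) = M.cyc X := by
  refine (M.cyc_subset _).antisymm fun e he => ?_
  obtain ⟨C, hC, hCX, heC⟩ := mem_cyc_iff.1 he
  exact (hC.subset_cyc (hC.subset_cyc hCX)) heC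

lemma IsFlat.cyclicFlat_cyc (hF : M.IsFlat F) : M.CyclicFlat (M.cyc F) := by
  refine ⟨isFlat_iff_closure_eq.2 (subset_antisymm (fun e he => ?_) (M.subset_closure _
    ((M.cyc_subset F).trans hF.subset_ground))), (M.cyc_cyc F).symm⟩
  by_contra heZ
  obtain ⟨C, hCZ, hC, heC⟩ := exists_isCircuit_of_mem_closure he heZ
  have heF : e ∈ F := hF.closure ▸ M.closure_subset_closure (M.cyc_subset F) he
  exact heZ (hC.subset_cyc (hCZ.trans (insert_subset heF (M.cyc_subset F))) heC)

lemma eRk_le_eRk_add_encard_sdiff (M : Matroid α) (hYX : Y ⊆ X) :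
    M.eRk X ≤ M.eRk Y + (X \ Y).encard := by
  simpa [union_sdiff_cancel hYX] using M.eRk_union_le_eRk_add_encard Y (X \ Y)

lemma IsBasis.indep_union_sdiff_cyc (hI : M.IsBasis I (M.cyc X)) (hX : X ⊆ M.E) :
    M.Indep (I ∪ (X \ M.cyc X)) := by
  by_contra hdep
  obtain ⟨C, hCsub, hC⟩ := (M.not_indep_iff (union_subset hI.indep.subset_ground
    (sdiff_subset.trans hX))).1 hdep |>.exists_isCircuit_subset
  have hCZ : C ⊆ M.cyc X :=
    hC.subset_cyc (hCsub.trans (union_subset (hI.subset.trans (M.cyc_subset X)) sdiff_subset))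
  have hCI : C ⊆ I := fun e he => (hCsub he).resolve_right fun h => h.2 (hCZ he)
  exact hC.not_indep (hI.indep.subset hCI)

lemma eRk_eq_eRk_cyc_add_encard (hX : X ⊆ M.E) :
    M.eRk X = M.eRk (M.cyc X) + (X \ M.cyc X).encard := by
  refine le_antisymm (M.eRk_le_eRk_add_encard_sdiff (M.cyc_subset X)) ?_
  obtain ⟨I, hI⟩ := M.exists_isBasis (M.cyc X) ((M.cyc_subset X).trans hX)
  rw [← hI.encard_eq_eRk, ← encard_union_eq (disjoint_sdiff_right.mono_left hI.subset)]
  exact (hI.indep_union_sdiff_cyc hX).encard_le_eRk_of_subset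
    (union_subset (hI.subset.trans (M.cyc_subset X)) sdiff_subset)

lemma exists_isFlat_superset_eRk_eq (hX : X ⊆ M.E) {k : ℕ∞} (hXk : M.eRk X ≤ k)
    (hk : k ≤ M.eRank) : ∃ G, M.IsFlat G ∧ X ⊆ G ∧ M.eRk G = k := by
  obtain ⟨I, hI⟩ := M.exists_isBasis X hX
  obtain ⟨B, hB, hIB⟩ := hI.indep.exists_isBase_superset
  obtain ⟨J, hIJ, hJB, hJk⟩ := exists_superset_subset_encard_eq hIB
    (hI.encard_eq_eRk ▸ hXk) (hB.encard_eq_eRank ▸ hk)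
  refine ⟨M.closure J, isFlat_closure J,
    hI.subset_closure.trans (M.closure_subset_closure hIJ), ?_⟩
  rw [eRk_closure_eq, (hB.indep.subset hJB).eRk_eq_encard, hJk]

lemma eRk_le_eRk_of_forall_cyclicFlat (hrank : ∀ Z, N.CyclicFlat Z → N.eRk Z = M.eRk Z)
    (hA : A ⊆ N.E) : M.eRk A ≤ N.eRk A := by
  set F := N.closure A
  have hF : N.IsFlat F := isFlat_closure A
  calc M.eRk A ≤ M.eRk F := M.eRk_mono (N.subset_closure A hA)
    _ ≤ M.eRk (N.cyc F) + (F \ N.cyc F).encard := M.eRk_le_eRk_add_encard_sdiff (N.cyc_subset F)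
    _ = N.eRk F := by
      rw [← hrank _ hF.cyclicFlat_cyc, ← eRk_eq_eRk_cyc_add_encard hF.subset_ground]
    _ = N.eRk A := N.eRk_closure_eq A

lemma eRank_le_eRank_of_forall_cyclicFlat (hrank : ∀ Z, N.CyclicFlat Z → N.eRk Z = M.eRk Z)
    (hE : N.E = M.E) (hcycE : N.CyclicFlat (M.cyc M.E)) :
    N.eRank ≤ M.eRank := by
  calc N.eRank = N.eRk M.E := by rw [← hE, eRk_ground]
    _ ≤ N.eRk (M.cyc M.E) + (M.E \ M.cyc M.E).encard :=
      N.eRk_le_eRk_add_encard_sdiff (M.cyc_subset M.E)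
    _ = M.eRank := by rw [hrank _ hcycE, ← eRk_eq_eRk_cyc_add_encard subset_rfl, eRk_ground]

end Matroid

theorem cyclicReduction_flat_container_general (M N : Matroid α)
    (hE : N.E = M.E)
    (hcycE : N.CyclicFlat (M.cyc M.E))
    (hrank : ∀ Z, N.CyclicFlat Z → N.eRk' Z = M.eRk' Z) :
    (∀ F, N.IsFlat F → ∃ G, M.IsFlat G ∧ F ⊆ G ∧ N.eRk' F = M.eRk' G) ∧
      ∀ A, A ⊆ M.E → M.eRk' A ≤ N.eRk' A := by
  simp only [eRk'_eq_eRk] at hrank ⊢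
  refine ⟨fun F hF => ?_, fun A hA => eRk_le_eRk_of_forall_cyclicFlat hrank (hE ▸ hA)⟩
  obtain ⟨G, hG, hFG, hGk⟩ := M.exists_isFlat_superset_eRk_eq (hE ▸ hF.subset_ground)
    (eRk_le_eRk_of_forall_cyclicFlat hrank hF.subset_ground)
    ((N.eRk_le_eRank F).trans (eRank_le_eRank_of_forall_cyclicFlat hrank hE hcycE))
  exact ⟨G, hG, hFG, hGk.symm⟩

/-- Let `N` be a cyclic reduction of a matroid `M` of rank at least `2`:
`{∅, cyc_M(E)} ⊆ Z(N) ⊆ Z(M)` and `rank_N = rank_M` on `Z(N)`. Then every flat `F` of `N`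
is contained in a flat `G` of `M` with `rank_N(F) = rank_M(G)`; in particular
`rank_M(A) ≤ rank_N(A)` for every `A ⊆ E`. -/
theorem cyclicReduction_flat_container (M N : Matroid α) [M.Finite]
    (hE : N.E = M.E) (hMr : (2 : ℕ∞) ≤ M.rk')
    (hempty : N.CyclicFlat ∅)
    (hcycE : N.CyclicFlat (M.cyc M.E))
    (hZ : ∀ Z, N.CyclicFlat Z → M.CyclicFlat Z)
    (hrank : ∀ Z, N.CyclicFlat Z → N.eRk' Z = M.eRk' Z) :
    (∀ F, N.IsFlat F → ∃ G, M.IsFlat G ∧ F ⊆ G ∧ N.eRk' F = M.eRk' G) ∧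
      ∀ A, A ⊆ M.E → M.eRk' A ≤ N.eRk' A :=
  cyclicReduction_flat_container_general M N hE hcycE hrank
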